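/- Let k be a field and d ≥ 0. Regard B_d as an A_{d+1}-module via f. Let L_1 and L_0 be free A_{d+1}-modules with bases (e_{ij})_{0≤i,j≤d} and (f_{ij})_{0≤i,j≤d} respectively. Define A_{d+1}-module maps d_0 : L_0 → B_d by d_0(f_{ij}) = c^{i+j}, and d_1 : L_1 → L_0 by d_1(e_{ij}) = f_{i+1,j} − f_{i,j+1} for 0 ≤ i, j < d; d_1(e_{dj}) = −(a_1 f_{0j} + a_2 f_{1j} + ⋯ + a_{d+1} f_{dj} + f_{d,j+1}) for 0 ≤ j < d; and d_1(e_{id}) = b_1 f_{i0} + b_2 f_{i1} + ⋯ + b_{d+1} f_{id} for 0 ≤ i ≤ d (here a_s, b_s denote the variables of A_{d+1}). Then the sequence 0 → L_1 →^{d_1} L_0 →^{d_0} B_d → 0 is exact: d_1 is injective, d_0 is surjective, and ker d_0 = im d_1. -/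

import Mathlib

open MvPolynomial

/-- Variables of `A_{d+1} = k[a_1,…,a_{d+1}, b_1,…,b_{d+1}]`:
`Sum.inl p` is `a_{p+1}`, `Sum.inr p` is `b_{p+1}`. -/
abbrev AVar (d : ℕ) : Type := Fin (d + 1) ⊕ Fin (d + 1)

/-- Variables of `k[a_1,…,a_d, c', b_1,…,b_{d+1}]`:
`Sum.inl p` is `a_{p+1}`, `Sum.inr (Sum.inl ())` is `c'`, `Sum.inr (Sum.inr p)` is `b_{p+1}`. -/
abbrev RVar (d : ℕ) : Type := Fin d ⊕ (Unit ⊕ Fin (d + 1))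

/-- Variables of `C = k[a_1,…,a_d, c', b_1,…,b_d, c'']`:
`Sum.inl (Sum.inl p)` is `a_{p+1}`, `Sum.inl (Sum.inr ())` is `c'`,
`Sum.inr (Sum.inl p)` is `b_{p+1}`, `Sum.inr (Sum.inr ())` is `c''`. -/
abbrev CVar (d : ℕ) : Type := (Fin d ⊕ Unit) ⊕ (Fin d ⊕ Unit)

/-- Variables of `B_d = k[a_1,…,a_d, b_1,…,b_d, c]`:
`Sum.inl (Sum.inl p)` is `a_{p+1}`, `Sum.inl (Sum.inr p)` is `b_{p+1}`, `Sum.inr ()` is `c`. -/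
abbrev BVar (d : ℕ) : Type := (Fin d ⊕ Fin d) ⊕ Unit

/-- `a_m` in `k[a_1,…,a_d,c',b_1,…,b_{d+1}]` with conventions `a_0 = 0`, `a_{d+1} = 1`. -/
noncomputable def aRm (k : Type) [Field k] (d : ℕ) (m : ℕ) : MvPolynomial (RVar d) k :=
  if h : 1 ≤ m ∧ m ≤ d then X (Sum.inl (⟨m - 1, by omega⟩ : Fin d))
  else if m = d + 1 then 1 else 0

/-- `f_1 : k[a_1,…,a_{d+1},b_1,…,b_{d+1}] → k[a_1,…,a_d,c',b_1,…,b_{d+1}]`,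
`b_i ↦ b_i`, `a_1 ↦ -c'a_1`, `a_i ↦ a_{i-1} - c'a_i` (`1 < i ≤ d`), `a_{d+1} ↦ a_d - c'`. -/
noncomputable def f1 (k : Type) [Field k] (d : ℕ) :
    MvPolynomial (AVar d) k →ₐ[k] MvPolynomial (RVar d) k :=
  aeval (fun v => match v with
    | Sum.inl p => aRm k d p - X (Sum.inr (Sum.inl ())) * aRm k d ((p : ℕ) + 1)
    | Sum.inr q => X (Sum.inr (Sum.inr q)))

/-- `f_2`: the automorphism of `k[a_1,…,a_d,c',b_1,…,b_{d+1}]` fixing `a_i`, `c'` and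
`b_i` for `i ≤ d`, and sending `b_{d+1} ↦ b_{d+1} + c'`. -/
noncomputable def f2 (k : Type) [Field k] (d : ℕ) :
    MvPolynomial (RVar d) k →ₐ[k] MvPolynomial (RVar d) k :=
  aeval (fun v => match v with
    | Sum.inr (Sum.inr q) =>
        if (q : ℕ) = d then X (Sum.inr (Sum.inr q)) + X (Sum.inr (Sum.inl ()))
        else X (Sum.inr (Sum.inr q))
    | v => X v)

/-- `b_m` in `C = k[a_1,…,a_d,c',b_1,…,b_d,c'']` with conventions `b_0 = 0`, `b_{d+1} = 1`
(the latter so that `b_m - c''·b_{m+1}` gives `b_d - c''` for `m = d`). -/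
noncomputable def bCm (k : Type) [Field k] (d : ℕ) (m : ℕ) : MvPolynomial (CVar d) k :=
  if h : 1 ≤ m ∧ m ≤ d then X (Sum.inr (Sum.inl (⟨m - 1, by omega⟩ : Fin d)))
  else if m = d + 1 then 1 else 0

/-- `f_3 : k[a_1,…,a_d,c',b_1,…,b_{d+1}] → C`, `a_i ↦ a_i`, `c' ↦ c'`,
`b_1 ↦ -c''b_1`, `b_i ↦ b_{i-1} - c''b_i` (`1 < i ≤ d`), `b_{d+1} ↦ b_d - c''`. -/
noncomputable def f3 (k : Type) [Field k] (d : ℕ) :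
    MvPolynomial (RVar d) k →ₐ[k] MvPolynomial (CVar d) k :=
  aeval (fun v => match v with
    | Sum.inl p => X (Sum.inl (Sum.inl p))
    | Sum.inr (Sum.inl ()) => X (Sum.inl (Sum.inr ()))
    | Sum.inr (Sum.inr q) => bCm k d q - X (Sum.inr (Sum.inr ())) * bCm k d ((q : ℕ) + 1))

/-- `f_4 : C → B_d`, `a_i ↦ a_i`, `b_i ↦ b_i`, `c' ↦ c`, `c'' ↦ c`. -/
noncomputable def f4 (k : Type) [Field k] (d : ℕ) :
    MvPolynomial (CVar d) k →ₐ[k] MvPolynomial (BVar d) k :=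
  aeval (fun v => match v with
    | Sum.inl (Sum.inl p) => X (Sum.inl (Sum.inl p))
    | Sum.inl (Sum.inr ()) => X (Sum.inr ())
    | Sum.inr (Sum.inl p) => X (Sum.inl (Sum.inr p))
    | Sum.inr (Sum.inr ()) => X (Sum.inr ()))

/-- `a_m` in `B_d` with conventions `a_0 = 0`, `a_{d+1} = 1`. -/
noncomputable def aBm (k : Type) [Field k] (d : ℕ) (m : ℕ) : MvPolynomial (BVar d) k :=
  if h : 1 ≤ m ∧ m ≤ d then X (Sum.inl (Sum.inl (⟨m - 1, by omega⟩ : Fin d)))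
  else if m = d + 1 then 1 else 0

/-- `b_m` in `B_d` with conventions `b_0 = 0`, `b_{d+1} = 0`. -/
noncomputable def bBm (k : Type) [Field k] (d : ℕ) (m : ℕ) : MvPolynomial (BVar d) k :=
  if h : 1 ≤ m ∧ m ≤ d then X (Sum.inl (Sum.inr (⟨m - 1, by omega⟩ : Fin d)))
  else 0

/-- `f : A_{d+1} → B_d`, `a_i ↦ a_{i-1} - c·a_i`, `b_i ↦ b_{i-1} - c·b_i`
with `a_0 = b_0 = b_{d+1} = 0` and `a_{d+1} = 1` in `B_d`. -/
noncomputable def fmap (k : Type) [Field k] (d : ℕ) :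
    MvPolynomial (AVar d) k →ₐ[k] MvPolynomial (BVar d) k :=
  aeval (fun v => match v with
    | Sum.inl p => aBm k d p - X (Sum.inr ()) * aBm k d ((p : ℕ) + 1)
    | Sum.inr q => bBm k d q - X (Sum.inr ()) * bBm k d ((q : ℕ) + 1))



/-- The standard basis vector `f_q` (or `e_q`) of the free module
`Fin (d+1) × Fin (d+1) → A_{d+1}`. -/
noncomputable def fbas (k : Type) [Field k] (d : ℕ) (q : Fin (d + 1) × Fin (d + 1)) :
    Fin (d + 1) × Fin (d + 1) → MvPolynomial (AVar d) k :=
  Pi.single q 1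

/-- The image under `d_1` of the basis vector `e_{ij}` (`p = (i,j)`), in the free
module `L_0` with basis `(f_{ij})`:
`d_1(e_{ij}) = f_{i+1,j} - f_{i,j+1}` for `i, j < d`;
`d_1(e_{dj}) = -(a_1 f_{0j} + ⋯ + a_{d+1} f_{dj} + f_{d,j+1})` for `j < d`;
`d_1(e_{id}) = b_1 f_{i0} + ⋯ + b_{d+1} f_{id}`. -/
noncomputable def d1row (k : Type) [Field k] (d : ℕ) (p : Fin (d + 1) × Fin (d + 1)) :
    Fin (d + 1) × Fin (d + 1) → MvPolynomial (AVar d) k :=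
  if hj : (p.2 : ℕ) = d then
    ∑ s : Fin (d + 1), (X (Sum.inr s) : MvPolynomial (AVar d) k) • fbas k d (p.1, s)
  else if hi : (p.1 : ℕ) = d then
    -((∑ s : Fin (d + 1),
        (X (Sum.inl s) : MvPolynomial (AVar d) k) • fbas k d (s, p.2)) +
      fbas k d (p.1, (⟨(p.2 : ℕ) + 1, by have := p.2.isLt; omega⟩ : Fin (d + 1))))
  else
    fbas k d ((⟨(p.1 : ℕ) + 1, by have := p.1.isLt; omega⟩ : Fin (d + 1)), p.2) -
      fbas k d (p.1, (⟨(p.2 : ℕ) + 1, by have := p.2.isLt; omega⟩ : Fin (d + 1)))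

/-- The map `d_1 : L_1 → L_0`. -/
noncomputable def D1 (k : Type) [Field k] (d : ℕ)
    (g : Fin (d + 1) × Fin (d + 1) → MvPolynomial (AVar d) k) :
    Fin (d + 1) × Fin (d + 1) → MvPolynomial (AVar d) k :=
  ∑ p : Fin (d + 1) × Fin (d + 1), g p • d1row k d p

/-- The map `d_0 : L_0 → B_d`, `f_{ij} ↦ c^{i+j}`, `A_{d+1}`-linear via `f`. -/
noncomputable def D0 (k : Type) [Field k] (d : ℕ)
    (g : Fin (d + 1) × Fin (d + 1) → MvPolynomial (AVar d) k) :
    MvPolynomial (BVar d) k :=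
  ∑ p : Fin (d + 1) × Fin (d + 1),
    fmap k d (g p) * X (Sum.inr ()) ^ ((p.1 : ℕ) + (p.2 : ℕ))

/-!
Factor `f` as `f₄ ∘ f₃ ∘ f₂ ∘ f₁` through `C = k[a_1,…,a_d, c', b_1,…,b_d, c'']`. Since
`∑ f₁(a_{i+1}) c'^i = -c'^{d+1}`, the map `f₁` presents its target as
`A_{d+1}[T]/(T^{d+1} + a_{d+1} T^d + ⋯ + a_1)` with `T ↦ c'`; the same holds for `f₃` and `c''`
after reordering variables, and `f₂` is an automorphism. Hence `C` is free over `A_{d+1}` with basis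
`c'^i c''^j`, i.e. `f_{ij} ↦ c'^i c''^j` identifies `L_0` with `C`. Under this identification `d_1`
becomes multiplication by `c' - c''`, and `d_0` becomes `f₄`, which sets `c' = c'' = c` and hence
has kernel `(c' - c'')`. Exactness follows because `C` is a domain.
-/

open Function
open scoped Polynomial

section PowCombination

variable {R S T : Type*} [CommRing R] [CommRing S] [CommRing T]

noncomputable def powCombination (φ : R →+* T) (t : T) (n : ℕ) (g : Fin n → R) : T :=
  ∑ i, φ (g i) * t ^ (i : ℕ)

theorem powCombination_bijective_of_adjoinRoot (φ : R →+* T) (t : T) {P : R[X]}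
    (hP : P.Monic) {n : ℕ} (hn : P.natDegree = n) (hPt : P.eval₂ φ t = 0)
    (ψ : T →+* AdjoinRoot P) (hψφ : ψ.comp φ = AdjoinRoot.of P)
    (hψt : ψ t = AdjoinRoot.root P) (hψ : ∀ y, AdjoinRoot.lift φ t hPt (ψ y) = y) :
    Bijective (powCombination φ t n) := by
  rw [← AdjoinRoot.powerBasis'_dim hP] at hn
  subst hn
  have hψlift : ψ.comp (AdjoinRoot.lift φ t hPt) = RingHom.id _ :=
    AdjoinRoot.ringHom_ext (by rw [RingHom.comp_assoc, AdjoinRoot.lift_comp_of, hψφ]; rfl)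
      (by simp [hψt])
  have hlift : Bijective (AdjoinRoot.lift φ t hPt) :=
    ⟨LeftInverse.injective (g := ψ) (RingHom.congr_fun hψlift), RightInverse.surjective hψ⟩
  have : powCombination φ t (AdjoinRoot.powerBasis' hP).dim =
      AdjoinRoot.lift φ t hPt ∘ (AdjoinRoot.powerBasis' hP).basis.equivFun.symm := by
    funext g
    rw [comp_apply, Module.Basis.equivFun_symm_apply, map_sum]
    simp [powCombination, Algebra.smul_def]
  rw [this]
  exact hlift.comp (LinearEquiv.bijective _)

noncomputable def powCombination₂ (φ : R →+* T) (s t : T) (m n : ℕ) :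
    (Fin m × Fin n → R) →ₛₗ[φ] T where
  toFun g := ∑ p, φ (g p) * (s ^ (p.1 : ℕ) * t ^ (p.2 : ℕ))
  map_add' g g' := by simp [add_mul, Finset.sum_add_distrib]
  map_smul' r g := by simp [Finset.mul_sum, mul_assoc]

theorem powCombination₂_apply (φ : R →+* T) (s t : T) (m n : ℕ) (g : Fin m × Fin n → R) :
    powCombination₂ φ s t m n g = ∑ p, φ (g p) * (s ^ (p.1 : ℕ) * t ^ (p.2 : ℕ)) :=
  rfl

theorem powCombination₂_single (φ : R →+* T) (s t : T) {m n : ℕ} (q : Fin m × Fin n) :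
    powCombination₂ φ s t m n (Pi.single q 1) = s ^ (q.1 : ℕ) * t ^ (q.2 : ℕ) := by
  simp [powCombination₂_apply, Pi.single_apply]

theorem powCombination₂_bijective (φ : R →+* S) (s : S) (ψ : S →+* T) (t : T) {m n : ℕ}
    (hφ : Bijective (powCombination φ s m)) (hψ : Bijective (powCombination ψ t n)) :
    Bijective (powCombination₂ (ψ.comp φ) (ψ s) t m n) := by
  have hcurry : Bijective (fun (g : Fin m × Fin n → R) j i => g (i, j)) :=
    ⟨fun g g' h => funext fun p => congr_fun (congr_fun h p.2) p.1,
      fun h => ⟨fun p => h p.2 p.1, rfl⟩⟩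
  have : ⇑(powCombination₂ (ψ.comp φ) (ψ s) t m n) =
      powCombination ψ t n ∘ (powCombination φ s m ∘ ·) ∘ fun g j i => g (i, j) := by
    funext g
    simp [powCombination₂_apply, powCombination, Fintype.sum_prod_type, Finset.sum_mul,
      mul_assoc, Finset.sum_comm (γ := Fin m)]
  rw [this]
  exact hψ.comp (hφ.comp_left.comp hcurry)

theorem sum_sub_mul_mul_pow {n : ℕ} (v : ℕ → T) (t : T) :
    ∑ i : Fin n, (v i - t * v (i + 1)) * t ^ (i : ℕ) = v 0 - v n * t ^ n := by
  calc _ = ∑ i ∈ Finset.range n, (v i * t ^ i - v (i + 1) * t ^ (i + 1)) := by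
        rw [Fin.sum_univ_eq_sum_range (fun i => (v i - t * v (i + 1)) * t ^ i)]
        exact Finset.sum_congr rfl fun i _ => by ring
    _ = _ := by rw [Finset.sum_range_sub', pow_zero, mul_one]

end PowCombination

/-! `Shift.hom` is `f₁` (with `W` the `b`-variables), and also `f₃` after renaming variables
(with `W` the variables `a_1,…,a_d, c'`). -/

namespace Shift

variable (k : Type*) [CommRing k] (d : ℕ) (W : Type*)

noncomputable def t : MvPolynomial (Fin d ⊕ (Unit ⊕ W)) k := X (Sum.inr (Sum.inl ()))

noncomputable def v (m : ℕ) : MvPolynomial (Fin d ⊕ (Unit ⊕ W)) k :=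
  if h : 1 ≤ m ∧ m ≤ d then X (Sum.inl ⟨m - 1, by omega⟩) else if m = d + 1 then 1 else 0

noncomputable def hom :
    MvPolynomial (Fin (d + 1) ⊕ W) k →ₐ[k] MvPolynomial (Fin d ⊕ (Unit ⊕ W)) k :=
  aeval fun
    | Sum.inl p => v k d W p - t k d W * v k d W (p + 1)
    | Sum.inr w => X (Sum.inr (Sum.inr w))

/-- `tail j = T^j + x_d T^(j-1) + ⋯ + x_(d+1-j)`, writing `x_i` for `X (Sum.inl i)`. The element
`t` is a root of `tail (d + 1)`, and `tail (d + 1 - m)` corresponds to `v m`. -/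
noncomputable def tail : ℕ → (MvPolynomial (Fin (d + 1) ⊕ W) k)[X]
  | 0 => 1
  | j + 1 => Polynomial.C (X (Sum.inl ⟨d - j, by omega⟩)) + Polynomial.X * tail j

theorem tail_succ (j : ℕ) :
    tail k d W (j + 1) =
      Polynomial.C (X (Sum.inl ⟨d - j, by omega⟩)) + Polynomial.X * tail k d W j :=
  rfl

theorem hom_X_inl (p : Fin (d + 1)) :
    hom k d W (X (Sum.inl p)) = v k d W p - t k d W * v k d W (p + 1) := by
  simp [hom]

theorem hom_X_inr (w : W) : hom k d W (X (Sum.inr w)) = X (Sum.inr (Sum.inr w)) := by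
  simp [hom]

theorem v_zero : v k d W 0 = 0 := by simp [v]

theorem v_succ_last : v k d W (d + 1) = 1 := by simp [v]

theorem v_succ (p : Fin d) : v k d W (p + 1) = X (Sum.inl p) := by
  simp [v]

theorem tail_monic_natDegree [Nontrivial k] (j : ℕ) :
    (tail k d W j).Monic ∧ (tail k d W j).natDegree = j := by
  induction j with
  | zero => exact ⟨Polynomial.monic_one, Polynomial.natDegree_one⟩
  | succ j ih =>
    have hX : (Polynomial.X * tail k d W j).Monic := Polynomial.monic_X.mul ih.1
    have hdeg : (Polynomial.X * tail k d W j).natDegree = j + 1 := by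
      rw [Polynomial.monic_X.natDegree_mul ih.1, Polynomial.natDegree_X, ih.2, add_comm]
    have hlt : (Polynomial.C (X (Sum.inl ⟨d - j, by omega⟩) :
        MvPolynomial (Fin (d + 1) ⊕ W) k)).degree <
        (Polynomial.X * tail k d W j).degree := by
      rw [Polynomial.degree_eq_natDegree hX.ne_zero, hdeg]
      exact Polynomial.degree_C_le.trans_lt (by exact_mod_cast j.succ_pos)
    exact ⟨hX.add_of_right hlt,
      by rw [tail, Polynomial.natDegree_add_eq_right_of_degree_lt hlt, hdeg]⟩

theorem tail_eval₂ {j : ℕ} (hj : j ≤ d + 1) :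
    (tail k d W j).eval₂ (hom k d W : MvPolynomial (Fin (d + 1) ⊕ W) k →+* _) (t k d W) =
      v k d W (d + 1 - j) := by
  induction j with
  | zero => simp [tail, v_succ_last]
  | succ j ih =>
    simp only [tail, Polynomial.eval₂_add, Polynomial.eval₂_C, Polynomial.eval₂_mul,
      Polynomial.eval₂_X, ih (by omega), RingHom.coe_coe, hom_X_inl]
    rw [show d - j + 1 = d + 1 - j by omega, show d + 1 - (j + 1) = d - j by omega]
    ring

theorem tail_eval₂_last :
    (tail k d W (d + 1)).eval₂ (hom k d W : MvPolynomial (Fin (d + 1) ⊕ W) k →+* _) (t k d W) =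
      0 := by
  rw [tail_eval₂ k d W le_rfl, Nat.sub_self, v_zero]

theorem sum_hom_X_inl_mul_pow :
    ∑ i : Fin (d + 1), hom k d W (X (Sum.inl i)) * t k d W ^ (i : ℕ) = -t k d W ^ (d + 1) := by
  simp only [hom_X_inl]
  rw [sum_sub_mul_mul_pow (v k d W), v_zero, v_succ_last, zero_sub, one_mul]

noncomputable def inv :
    MvPolynomial (Fin d ⊕ (Unit ⊕ W)) k →ₐ[k] AdjoinRoot (tail k d W (d + 1)) :=
  aeval fun
    | Sum.inl p => AdjoinRoot.mk _ (tail k d W (d - p))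
    | Sum.inr (Sum.inl ()) => AdjoinRoot.root _
    | Sum.inr (Sum.inr w) => AdjoinRoot.of _ (X (Sum.inr w))

theorem inv_t : inv k d W (t k d W) = AdjoinRoot.root _ := by
  simp [inv, t]

theorem inv_v {m : ℕ} (hm : m ≤ d + 1) :
    inv k d W (v k d W m) = AdjoinRoot.mk _ (tail k d W (d + 1 - m)) := by
  unfold v
  split_ifs with h h'
  · simp only [inv, aeval_X]
    congr 2
    omega
  · rw [h', Nat.sub_self, tail, map_one, map_one]
  · obtain rfl : m = 0 := by omega
    simp

theorem inv_comp_hom :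
    (inv k d W : MvPolynomial (Fin d ⊕ (Unit ⊕ W)) k →+* AdjoinRoot (tail k d W (d + 1))).comp
      (hom k d W : MvPolynomial (Fin (d + 1) ⊕ W) k →+* _) = AdjoinRoot.of _ := by
  refine MvPolynomial.ringHom_ext (fun a => ?_) fun x => ?_
  · simp only [RingHom.coe_comp, RingHom.coe_coe, comp_apply, ← algebraMap_eq,
      AlgHom.commutes]
    rfl
  · rcases x with p | w
    · simp only [RingHom.coe_comp, RingHom.coe_coe, comp_apply, hom_X_inl, map_sub,
        map_mul, inv_t, inv_v k d W p.isLt.le, inv_v k d W (Nat.succ_le_succ p.is_le)]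
      rw [show d + 1 - p = d - p + 1 by omega, Nat.add_sub_add_right, tail_succ k d W (d - p),
        map_add, map_mul, AdjoinRoot.mk_X, AdjoinRoot.mk_C, add_sub_cancel_right]
      congr
      omega
    · simp [hom_X_inr, inv]

theorem lift_inv (y : MvPolynomial (Fin d ⊕ (Unit ⊕ W)) k) :
    AdjoinRoot.lift (hom k d W : MvPolynomial (Fin (d + 1) ⊕ W) k →+* _) (t k d W)
      (tail_eval₂_last k d W) (inv k d W y) = y := by
  have : (AdjoinRoot.liftAlgHom _ (hom k d W) (t k d W) (tail_eval₂_last k d W)).comp (inv k d W)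
      = AlgHom.id k _ := by
    refine MvPolynomial.algHom_ext fun x => ?_
    rcases x with p | ⟨⟩ | w
    · simp only [inv, AlgHom.comp_apply, aeval_X, AdjoinRoot.liftAlgHom_mk]
      rw [tail_eval₂ k d W (by omega), show d + 1 - (d - p) = p + 1 by omega, v_succ]
      rfl
    · simp [inv, t]
    · simp only [inv, AlgHom.comp_apply, aeval_X]
      rw [AdjoinRoot.liftAlgHom_of, hom_X_inr]
      rfl
  exact congr($this y)

theorem powCombination_bijective [Nontrivial k] :
    Bijective (powCombination (hom k d W : MvPolynomial (Fin (d + 1) ⊕ W) k →+* _) (t k d W)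
      (d + 1)) :=
  powCombination_bijective_of_adjoinRoot _ _ (tail_monic_natDegree k d W (d + 1)).1
    (tail_monic_natDegree k d W (d + 1)).2 (tail_eval₂_last k d W) (inv k d W)
    (inv_comp_hom k d W) (inv_t k d W) (lift_inv k d W)

end Shift

section Factorization

variable (k : Type) [Field k] (d : ℕ)

theorem f1_eq_shift_hom : f1 k d = Shift.hom k d (Fin (d + 1)) := by
  unfold f1 Shift.hom
  congr 1
  funext v
  rcases v with p | q <;> rfl

noncomputable def f2Inv : MvPolynomial (RVar d) k →ₐ[k] MvPolynomial (RVar d) k :=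
  aeval fun v => match v with
    | Sum.inr (Sum.inr q) =>
        if (q : ℕ) = d then X (Sum.inr (Sum.inr q)) - X (Sum.inr (Sum.inl ()))
        else X (Sum.inr (Sum.inr q))
    | v => X v

theorem f2_bijective : Bijective (f2 k d) := by
  refine (AlgEquiv.ofAlgHom (f2 k d) (f2Inv k d) ?_ ?_).bijective <;>
  · refine algHom_ext fun v => ?_
    rcases v with p | ⟨⟩ | q
    · simp [f2, f2Inv]
    · simp [f2, f2Inv]
    · by_cases h : (q : ℕ) = d <;> simp [f2, f2Inv, h]

/-- Source and target reorderings of variables turning `f₃` into `Shift.hom`. -/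
def srcEquiv : Fin (d + 1) ⊕ (Fin d ⊕ Unit) ≃ RVar d :=
  (Equiv.sumComm _ _).trans (Equiv.sumAssoc _ _ _)

def tgtEquiv : Fin d ⊕ (Unit ⊕ (Fin d ⊕ Unit)) ≃ CVar d :=
  (Equiv.sumAssoc _ _ _).symm.trans (Equiv.sumComm _ _)

/-- `c₁` and `c₂` are the variables `c'` and `c''` of `C`. -/
noncomputable def c₁ : MvPolynomial (CVar d) k := X (Sum.inl (Sum.inr ()))

noncomputable def c₂ : MvPolynomial (CVar d) k := X (Sum.inr (Sum.inr ()))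

theorem rename_tgtEquiv_v (m : ℕ) :
    rename (tgtEquiv d) (Shift.v k d (Fin d ⊕ Unit) m) = bCm k d m := by
  unfold Shift.v bCm
  split_ifs <;> simp [tgtEquiv]

theorem f3_comp_rename :
    (f3 k d).comp (rename (srcEquiv d)) = (rename (tgtEquiv d)).comp (Shift.hom k d _) := by
  refine algHom_ext fun v => ?_
  rcases v with q | p | ⟨⟩
  · simp only [AlgHom.comp_apply, rename_X, Shift.hom_X_inl, map_sub, map_mul,
      rename_tgtEquiv_v]
    simp [f3, srcEquiv, Shift.t, tgtEquiv]
  all_goals simp [f3, srcEquiv, Shift.hom_X_inr, tgtEquiv]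

theorem powCombination_f3_bijective :
    Bijective (powCombination (f3 k d : MvPolynomial (RVar d) k →+* _) (c₂ k d) (d + 1)) := by
  have : powCombination (f3 k d : MvPolynomial (RVar d) k →+* _) (c₂ k d) (d + 1) =
      rename (tgtEquiv d) ∘
        powCombination
          (Shift.hom k d (Fin d ⊕ Unit) : MvPolynomial (Fin (d + 1) ⊕ (Fin d ⊕ Unit)) k →+* _)
          (Shift.t k d (Fin d ⊕ Unit)) (d + 1) ∘ (rename (srcEquiv d).symm ∘ ·) := by
    funext g
    simp only [powCombination, comp_apply, map_sum, map_mul, map_pow, RingHom.coe_coe]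
    refine Finset.sum_congr rfl fun i _ => ?_
    rw [← AlgHom.comp_apply (rename (tgtEquiv d)), ← f3_comp_rename, AlgHom.comp_apply,
      rename_rename, Equiv.self_comp_symm, rename_id]
    simp [Shift.t, tgtEquiv, c₂]
  rw [this]
  exact (renameEquiv k (tgtEquiv d)).bijective.comp
    ((Shift.powCombination_bijective k d _).comp (renameEquiv k _).bijective.comp_left)

noncomputable def toC : MvPolynomial (AVar d) k →ₐ[k] MvPolynomial (CVar d) k :=
  (f3 k d).comp ((f2 k d).comp (f1 k d))

noncomputable def l0ToC : (Fin (d + 1) × Fin (d + 1) → MvPolynomial (AVar d) k) →ₛₗ[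
    (toC k d : MvPolynomial (AVar d) k →+* MvPolynomial (CVar d) k)] MvPolynomial (CVar d) k :=
  powCombination₂ _ (c₁ k d) (c₂ k d) (d + 1) (d + 1)

theorem l0ToC_bijective : Bijective (l0ToC k d) := by
  have h₁ : Bijective (powCombination (f1 k d : MvPolynomial (AVar d) k →+* MvPolynomial (RVar d) k)
      (X (Sum.inr (Sum.inl ()))) (d + 1)) := by
    rw [f1_eq_shift_hom]
    exact Shift.powCombination_bijective k d _
  have h₂ : Bijective (powCombination
      ((f3 k d).comp (f2 k d) : MvPolynomial (RVar d) k →+* _) (c₂ k d) (d + 1)) :=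
    (powCombination_f3_bijective k d).comp (f2_bijective k d).comp_left
  have hc₁ : (f3 k d).comp (f2 k d) (X (Sum.inr (Sum.inl ()))) = c₁ k d := by
    simp [f2, f3, c₁]
  have := powCombination₂_bijective _ _ _ _ h₁ h₂
  rwa [RingHom.coe_coe, hc₁] at this

end Factorization

section Exactness

variable (k : Type) [Field k] (d : ℕ)

theorem sum_toC_X_inl_mul_pow :
    ∑ s : Fin (d + 1), toC k d (X (Sum.inl s)) * c₁ k d ^ (s : ℕ) = -c₁ k d ^ (d + 1) := by
  have h := congr(((f3 k d).comp (f2 k d)) $(Shift.sum_hom_X_inl_mul_pow k d (Fin (d + 1))))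
  have hc₁ : f3 k d (f2 k d (Shift.t k d (Fin (d + 1)))) = c₁ k d := by
    simp [Shift.t, f2, f3, c₁]
  simpa [map_sum, hc₁, toC, f1_eq_shift_hom] using h

theorem toC_X_inr (q : Fin (d + 1)) :
    toC k d (X (Sum.inr q)) =
      bCm k d q - c₂ k d * bCm k d (q + 1) + if (q : ℕ) = d then c₁ k d else 0 := by
  by_cases h : (q : ℕ) = d <;> simp [toC, f1, f2, f3, h, c₁, c₂]

theorem sum_toC_X_inr_mul_pow :
    ∑ s : Fin (d + 1), toC k d (X (Sum.inr s)) * c₂ k d ^ (s : ℕ) =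
      (c₁ k d - c₂ k d) * c₂ k d ^ d := by
  simp only [toC_X_inr, add_mul, Finset.sum_add_distrib, sum_sub_mul_mul_pow (bCm k d)]
  rw [Finset.sum_eq_single (Fin.last d)
    (fun s _ hs => by simp [show (s : ℕ) ≠ d from fun h => hs (Fin.ext h)]) (by simp)]
  simp [bCm]
  ring

theorem l0ToC_fbas (q : Fin (d + 1) × Fin (d + 1)) :
    l0ToC k d (fbas k d q) = c₁ k d ^ (q.1 : ℕ) * c₂ k d ^ (q.2 : ℕ) :=
  powCombination₂_single _ _ _ q

theorem l0ToC_d1row (p : Fin (d + 1) × Fin (d + 1)) :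
    l0ToC k d (d1row k d p) = (c₁ k d - c₂ k d) * (c₁ k d ^ (p.1 : ℕ) * c₂ k d ^ (p.2 : ℕ)) := by
  unfold d1row
  split_ifs with hj hi
  · simp only [map_sum, map_smulₛₗ, l0ToC_fbas, smul_eq_mul, RingHom.coe_coe]
    simp_rw [mul_left_comm _ (c₁ k d ^ _), ← Finset.mul_sum, sum_toC_X_inr_mul_pow, hj]
  · simp only [map_neg, map_add, map_sum, map_smulₛₗ, l0ToC_fbas, smul_eq_mul, RingHom.coe_coe]
    simp_rw [← mul_assoc, ← Finset.sum_mul, sum_toC_X_inl_mul_pow, hi]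
    ring
  · simp only [map_sub, l0ToC_fbas]
    rw [pow_succ, pow_succ]
    ring

theorem l0ToC_D1 (g : Fin (d + 1) × Fin (d + 1) → MvPolynomial (AVar d) k) :
    l0ToC k d (D1 k d g) = (c₁ k d - c₂ k d) * l0ToC k d g := by
  rw [D1, map_sum]
  simp only [map_smulₛₗ, l0ToC_d1row, smul_eq_mul, RingHom.coe_coe]
  rw [l0ToC, powCombination₂_apply, Finset.mul_sum]
  exact Finset.sum_congr rfl fun p _ => by rw [RingHom.coe_coe]; ring

theorem f4_comp_toC : (f4 k d).comp (toC k d) = fmap k d := by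
  have ha (m : ℕ) : f4 k d (f3 k d (f2 k d (aRm k d m))) = aBm k d m := by
    unfold aRm aBm
    split_ifs <;> simp [f2, f3, f4]
  have hb {m : ℕ} (hm : m ≤ d) : f4 k d (bCm k d m) = bBm k d m := by
    unfold bCm bBm
    split_ifs <;> first | omega | simp [f4]
  have hc : f4 k d (c₁ k d) = X (Sum.inr ()) ∧ f4 k d (c₂ k d) = X (Sum.inr ()) := by
    simp [f4, c₁, c₂]
  refine algHom_ext fun v => ?_
  rcases v with p | q
  · have hc' : f4 k d (f3 k d (f2 k d (X (Sum.inr (Sum.inl ()))))) = X (Sum.inr ()) := by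
      simp [f2, f3, f4]
    simp only [toC, AlgHom.comp_apply, f1, fmap, aeval_X, map_sub, map_mul, ha, hc']
  · rw [AlgHom.comp_apply, toC_X_inr]
    simp only [fmap, aeval_X]
    split_ifs with hq
    · have hlast : bCm k d (d + 1) = 1 ∧ bBm k d (d + 1) = 0 := by simp [bCm, bBm]
      simp [hq, hb le_rfl, hc, hlast]
    · simp [hb, hc, show (q : ℕ) + 1 ≤ d by omega, q.is_le]

theorem D0_eq_f4_l0ToC (g : Fin (d + 1) × Fin (d + 1) → MvPolynomial (AVar d) k) :
    D0 k d g = f4 k d (l0ToC k d g) := by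
  simp only [D0, l0ToC, powCombination₂_apply, map_sum, map_mul, map_pow, RingHom.coe_coe,
    ← AlgHom.comp_apply, f4_comp_toC, pow_add]
  simp [f4, c₁, c₂]

noncomputable def f4Section : MvPolynomial (BVar d) k →ₐ[k] MvPolynomial (CVar d) k :=
  aeval fun v => match v with
    | Sum.inl (Sum.inl p) => X (Sum.inl (Sum.inl p))
    | Sum.inl (Sum.inr p) => X (Sum.inr (Sum.inl p))
    | Sum.inr () => c₁ k d

theorem f4_f4Section (b : MvPolynomial (BVar d) k) : f4 k d (f4Section k d b) = b := by
  have : (f4 k d).comp (f4Section k d) = AlgHom.id k _ := by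
    refine algHom_ext fun v => ?_
    rcases v with (p | p) | ⟨⟩ <;> simp [f4, f4Section, c₁]
  exact congr($this b)

theorem f4_c₁_sub_c₂ : f4 k d (c₁ k d - c₂ k d) = 0 := by
  simp [f4, c₁, c₂]

theorem c₁_sub_c₂_dvd_of_f4_eq_zero {x : MvPolynomial (CVar d) k} (hx : f4 k d x = 0) :
    c₁ k d - c₂ k d ∣ x := by
  let I := Ideal.span {c₁ k d - c₂ k d}
  have : (Ideal.Quotient.mkₐ k I).comp ((f4Section k d).comp (f4 k d)) =
      Ideal.Quotient.mkₐ k I := by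
    refine algHom_ext fun v => ?_
    rcases v with (p | ⟨⟩) | (p | ⟨⟩)
    · simp [f4, f4Section]
    · simp [f4, f4Section, c₁]
    · simp [f4, f4Section]
    · simp only [AlgHom.comp_apply, f4, f4Section, aeval_X, Ideal.Quotient.mkₐ_eq_mk,
        Ideal.Quotient.eq]
      exact Ideal.mem_span_singleton_self _
  rw [← Ideal.mem_span_singleton, ← Ideal.Quotient.eq_zero_iff_mem,
    ← Ideal.Quotient.mkₐ_eq_mk k I, ← this]
  simp [hx]

theorem c₁_sub_c₂_ne_zero : c₁ k d - c₂ k d ≠ 0 :=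
  sub_ne_zero.mpr fun h => by simpa using X_injective h

end Exactness

/-- the sequence `0 → L_1 → L_0 → B_d → 0` is exact:
`d_1` is injective, `d_0` is surjective, and `ker d_0 = im d_1`. -/
theorem statement9 (k : Type) [Field k] (d : ℕ) :
    Function.Injective (D1 k d) ∧
    Function.Surjective (D0 k d) ∧
    ∀ g : Fin (d + 1) × Fin (d + 1) → MvPolynomial (AVar d) k,
      D0 k d g = 0 ↔ g ∈ Set.range (D1 k d) := by
  have hbij := l0ToC_bijective k d
  have hδ := c₁_sub_c₂_ne_zero k d
  refine ⟨fun g g' h => hbij.1 (mul_left_cancel₀ hδ ?_), fun b => ?_, fun g => ?_⟩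
  · rw [← l0ToC_D1, ← l0ToC_D1, h]
  · obtain ⟨g, hg⟩ := hbij.2 (f4Section k d b)
    exact ⟨g, by rw [D0_eq_f4_l0ToC, hg, f4_f4Section]⟩
  · rw [D0_eq_f4_l0ToC]
    constructor
    · intro h
      obtain ⟨u, hu⟩ := c₁_sub_c₂_dvd_of_f4_eq_zero k d h
      obtain ⟨g', rfl⟩ := hbij.2 u
      exact ⟨g', hbij.1 (by rw [l0ToC_D1, hu])⟩
    · rintro ⟨g', rfl⟩
      rw [l0ToC_D1, map_mul, f4_c₁_sub_c₂, zero_mul]
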